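/- In S = M₂(ℝ⁺), if I is a subtractive left ideal strictly containing Nᵣ = { [[ra, a],[rb, b]] : a, b ∈ ℝ⁺ } for some r ∈ ℝ⁺ \ {0}, then I = S. -/

import Mathlib

/-- The 2×2 matrix semiring over the nonnegative reals. -/
abbrev M2 : Type := Matrix (Fin 2) (Fin 2) NNReal

/-- A subset of the semiring is a left ideal. -/
def IsLeftIdeal (I : Set M2) : Prop :=
  0 ∈ I ∧ (∀ x ∈ I, ∀ y ∈ I, x + y ∈ I) ∧ ∀ s : M2, ∀ x ∈ I, s * x ∈ I

/-- A subset is subtractive: `s + x = y` with `x, y ∈ I` implies `s ∈ I`. -/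
def IsSubtractive (I : Set M2) : Prop :=
  ∀ s x y : M2, x ∈ I → y ∈ I → s + x = y → s ∈ I

/-- `Nᵣ = { [[ra,a],[rb,b]] : a, b ∈ ℝ⁺ }`. -/
def Nr (r : NNReal) : Set M2 :=
  {A | ∃ a b : NNReal, A 0 0 = r * a ∧ A 0 1 = a ∧ A 1 0 = r * b ∧ A 1 1 = b}

/-- Column matrix `[[a,0],[b,0]]`. -/
def Cmat (a b : NNReal) : M2 := Matrix.of ![![a, 0], ![b, 0]]

lemma Cmat_apply (a b : NNReal) (k l : Fin 2) :
    Cmat a b k l = if l = 0 then (![a, b] k) else 0 := by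
  fin_cases k <;> fin_cases l <;> simp [Cmat]

/-- If `I` is a subtractive left ideal of `M₂(ℝ⁺)` strictly containing
`Nᵣ` for some `r ∈ ℝ⁺ \ {0}`, then `I = S`. -/
theorem stmt_10 (r : NNReal) (hr : r ≠ 0) (I : Set M2) (hI : IsLeftIdeal I)
    (hSub : IsSubtractive I) (hNr : Nr r ⊂ I) : I = Set.univ := by
  obtain ⟨h0, hadd, hmul⟩ := hI
  have hNsub : Nr r ⊆ I := hNr.1
  obtain ⟨M, hMI, hMN⟩ := Set.exists_of_ssubset hNr
  -- find a bad row i: M i 0 ≠ r * M i 1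
  have hbad : ∃ i : Fin 2, M i 0 ≠ r * M i 1 := by
    by_contra h
    push_neg at h
    exact hMN ⟨M 0 1, M 1 1, h 0, rfl, h 1, rfl⟩
  obtain ⟨i, hi⟩ := hbad
  set c := M i 0 with hc
  set d := M i 1 with hd
  -- B has both rows equal to row i of M
  set P : M2 := Matrix.of (fun _ j => if j = i then (1 : NNReal) else 0) with hP
  have hB : (P * M) ∈ I := hmul P M hMI
  have hBapp : ∀ k l, (P * M) k l = M i l := by
    intro k l
    rw [Matrix.mul_apply, Fin.sum_univ_two]
    fin_cases i <;> simp [hP]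
  -- get Cmat u u ∈ I for some u ≠ 0
  have key : ∃ u : NNReal, u ≠ 0 ∧ Cmat u u ∈ I := by
    have hN : (Matrix.of ![![r * d, d], ![r * d, d]]) ∈ Nr r := ⟨d, d, by simp⟩
    rcases le_or_gt (r * d) c with hle | hlt
    · refine ⟨c - (r * d), ?_, ?_⟩
      · intro h
        exact hi (le_antisymm (tsub_eq_zero_iff_le.mp h) hle)
      · refine hSub _ _ _ (hNsub hN) hB ?_
        funext k l
        simp only [Matrix.add_apply, Cmat_apply, hBapp]
        fin_cases k <;> fin_cases l <;>
          simp [tsub_add_cancel_of_le hle, tsub_add_cancel_of_le (show r * M i 1 ≤ M i 0 from hle), hc, hd]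
    · refine ⟨(r * d) - c, ?_, ?_⟩
      · intro h
        exact absurd (tsub_eq_zero_iff_le.mp h) (not_le_of_gt hlt)
      · refine hSub _ _ _ hB (hNsub hN) ?_
        funext k l
        simp only [Matrix.add_apply, Cmat_apply, hBapp]
        fin_cases k <;> fin_cases l <;>
          simp [tsub_add_cancel_of_le hlt.le, tsub_add_cancel_of_le (show M i 0 ≤ r * M i 1 from hlt.le), hc, hd]
  obtain ⟨u, hu, huI⟩ := key
  -- all column matrices are in I
  have hcol : ∀ a b : NNReal, Cmat a b ∈ I := by
    intro a b
    have := hmul (Cmat (a / u) (b / u)) (Cmat u u) huI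
    convert this using 1
    funext k l
    rw [Matrix.mul_apply, Fin.sum_univ_two]
    simp only [Cmat_apply]
    fin_cases k <;> fin_cases l <;> simp [div_mul_cancel₀, hu]
  -- conclude
  ext M'
  simp only [Set.mem_univ, iff_true]
  have hN' : (Matrix.of ![![r * M' 0 1, M' 0 1], ![r * M' 1 1, M' 1 1]]) ∈ Nr r :=
    ⟨M' 0 1, M' 1 1, by simp⟩
  have hy : (Matrix.of ![![r * M' 0 1, M' 0 1], ![r * M' 1 1, M' 1 1]] : M2)
      + Cmat (M' 0 0) (M' 1 0) ∈ I := hadd _ (hNsub hN') _ (hcol _ _)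
  refine hSub M' (Cmat (r * M' 0 1) (r * M' 1 1)) _ (hcol _ _) hy ?_
  funext k l
  simp only [Matrix.add_apply, Cmat_apply]
  fin_cases k <;> fin_cases l <;> simp <;> apply add_comm
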